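/- Let Z ~ N(m, s^2) with s > 0 and α ∈ (0,1). Then the tail conditional expectation of L = y − x·e^Z beyond its VaR satisfies E[L · 1{L ≥ VaR^α(L)}] = α·y − x·e^{m + s^2/2}·Φ(Φ^{-1}(α) − s), where VaR^α(L) = y − x·exp(m + s·Φ^{-1}(α)), for any y ∈ ℝ and x > 0. -/

import Mathlib

/-!
Since `x > 0`, the event `L ≥ VaR^α(L)` is `{Z ≤ c}` with `c = m + s Φ⁻¹(α)`. The constant part
contributes `y P(Z ≤ c) = y Φ(Φ⁻¹(α)) = α y`, using continuity of `Φ`. For the exponential part,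
completing the square gives `e^z φ_{m,s²}(z) = e^{m + s²/2} φ_{m+s²,s²}(z)` (exponential tilting),
so `E[e^Z; Z ≤ c] = e^{m + s²/2} P(Z' ≤ c)` with `Z' ~ N(m + s², s²)`, and standardizing `Z'`
gives `Φ(Φ⁻¹(α) - s)`.
-/

open MeasureTheory ProbabilityTheory

/-- Standard normal cumulative distribution function. -/
noncomputable def stdCDF (x : ℝ) : ℝ := ((gaussianReal 0 1) (Set.Iic x)).toReal

/-- Standard normal quantile function (inverse CDF). -/
noncomputable def stdQuantile (a : ℝ) : ℝ := sInf {x : ℝ | a ≤ stdCDF x}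

open Set Filter Topology
open scoped NNReal

lemma continuous_cdf {μ : Measure ℝ} [IsProbabilityMeasure μ] [NullSingletonClass μ] :
    Continuous (cdf μ) := by
  refine continuous_iff_continuousAt.2 fun t ↦ ?_
  have hleft : Function.leftLim (cdf μ) t = cdf μ t := by
    have h := (cdf μ).measure_singleton t
    rw [measure_cdf, measure_singleton, eq_comm, ENNReal.ofReal_eq_zero, sub_nonpos] at h
    exact le_antisymm ((monotone_cdf μ).leftLim_le le_rfl) h
  refine continuousAt_iff_continuous_left_right.2 ⟨?_, (cdf μ).right_continuous t⟩
  exact continuousWithinAt_Iio_iff_Iic.1 <|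
    (Monotone.continuousWithinAt_Iio_iff_leftLim_eq (monotone_cdf μ)).2 hleft

lemma apply_csInf_setOf_le_eq {F : ℝ → ℝ} (hF : Continuous F) {a : ℝ}
    (hbot : ∀ᶠ t in atBot, F t < a) (htop : ∃ t, a ≤ F t) : F (sInf {t | a ≤ F t}) = a := by
  obtain ⟨T, hT⟩ := eventually_atBot.1 hbot
  have hbdd : BddBelow {t | a ≤ F t} :=
    ⟨T, fun t ht ↦ le_of_not_ge fun htT ↦ (hT t htT).not_ge ht⟩
  set q := sInf {t | a ≤ F t}
  refine le_antisymm ?_ ((isClosed_le continuous_const hF).csInf_mem htop hbdd)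
  have hlt : ∀ᶠ t in 𝓝[<] q, F t < a :=
    eventually_nhdsWithin_of_forall fun t ht ↦ not_le.1 fun h ↦ (csInf_le hbdd h).not_gt ht
  exact le_of_tendsto (hF.continuousAt.tendsto.mono_left nhdsWithin_le_nhds)
    (hlt.mono fun _ ↦ le_of_lt)

lemma stdCDF_eq_cdf : stdCDF = cdf (gaussianReal 0 1) := by
  ext t
  rw [cdf_eq_real]
  rfl

lemma stdCDF_stdQuantile {α : ℝ} (hα : α ∈ Ioo (0 : ℝ) 1) : stdCDF (stdQuantile α) = α := by
  have := nullSingletonClass_gaussianReal (μ := 0) one_ne_zero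
  rw [stdQuantile, stdCDF_eq_cdf]
  exact apply_csInf_setOf_le_eq continuous_cdf
    ((tendsto_cdf_atBot _).eventually (eventually_lt_nhds hα.1))
    ((tendsto_cdf_atTop _).eventually (eventually_ge_nhds hα.2)).exists

lemma gaussianReal_real_Iic {s : ℝ} (hs : 0 < s) (μ c : ℝ) :
    (gaussianReal μ (s ^ 2).toNNReal).real (Iic c) = stdCDF ((c - μ) / s) := by
  have hstd : (gaussianReal μ (s ^ 2).toNNReal).map (fun z ↦ (z - μ) / s) = gaussianReal 0 1 := by
    change Measure.map ((· / s) ∘ (· - μ)) _ = _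
    rw [← Measure.map_map (by fun_prop) (by fun_prop), gaussianReal_map_sub_const,
      gaussianReal_map_div_const, sub_self, zero_div]
    congr
    ext
    simp [hs.ne', sq_nonneg]
  have hpre : (fun z ↦ (z - μ) / s) ⁻¹' Iic ((c - μ) / s) = Iic c := by
    ext z
    simp [div_le_div_iff_of_pos_right hs]
  rw [stdCDF, ← hstd, Measure.map_apply (by fun_prop) measurableSet_Iic, hpre]
  rfl

lemma exp_mul_gaussianPDFReal (μ : ℝ) (v : ℝ≥0) (z : ℝ) :
    Real.exp z * gaussianPDFReal μ v z = Real.exp (μ + v / 2) * gaussianPDFReal (μ + v) v z := by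
  rcases eq_or_ne v 0 with rfl | hv
  · simp
  simp only [gaussianPDFReal]
  rw [mul_left_comm, mul_left_comm (Real.exp _), ← Real.exp_add, ← Real.exp_add]
  congr 2
  field_simp
  ring

lemma setIntegral_exp_gaussianReal (μ : ℝ) (v : ℝ≥0) {t : Set ℝ} (ht : MeasurableSet t) :
    ∫ z in t, Real.exp z ∂gaussianReal μ v =
      Real.exp (μ + v / 2) * (gaussianReal (μ + v) v).real t := by
  rcases eq_or_ne v 0 with rfl | hv
  · classical
    by_cases hμ : μ ∈ t <;> simp [gaussianReal_zero_var, restrict_dirac, measureReal_def, hμ]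
  rw [← integral_indicator ht, integral_gaussianReal_eq_integral_smul hv,
    measureReal_def, gaussianReal_apply_eq_integral _ hv, ENNReal.toReal_ofReal
      (setIntegral_nonneg ht fun _ _ ↦ gaussianPDFReal_nonneg _ _ _),
    ← integral_const_mul, ← integral_indicator ht]
  congr 1 with z
  by_cases hz : z ∈ t
  · simp only [indicator_of_mem hz, smul_eq_mul]
    rw [mul_comm, exp_mul_gaussianPDFReal, mul_comm]
  · simp [hz]

theorem unnormalized_tce_lognormal (m s x y α : ℝ) (hs : 0 < s) (hx : 0 < x)
    (hα : α ∈ Set.Ioo (0 : ℝ) 1) :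
    ∫ z in {z : ℝ | y - x * Real.exp z ≥ y - x * Real.exp (m + s * stdQuantile α)},
        (y - x * Real.exp z) ∂(gaussianReal m (Real.toNNReal (s ^ 2))) =
      α * y - x * Real.exp (m + s ^ 2 / 2) * stdCDF (stdQuantile α - s) := by
  set q := stdQuantile α
  have hv : ((s ^ 2).toNNReal : ℝ) = s ^ 2 := Real.coe_toNNReal _ (sq_nonneg s)
  have hlevel : {z : ℝ | y - x * Real.exp z ≥ y - x * Real.exp (m + s * q)} = Iic (m + s * q) := by
    ext z
    simp only [mem_ofPred_eq, mem_Iic, ge_iff_le, sub_le_sub_iff_left, mul_le_mul_iff_right₀ hx,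
      Real.exp_le_exp]
  have hexp : Integrable Real.exp (gaussianReal m (s ^ 2).toNNReal) := by
    simpa using integrable_exp_mul_gaussianReal (μ := m) (v := (s ^ 2).toNNReal) 1
  rw [hlevel, integral_sub (integrable_const y) (hexp.const_mul x).integrableOn,
    setIntegral_const, integral_const_mul, setIntegral_exp_gaussianReal _ _ measurableSet_Iic,
    gaussianReal_real_Iic hs, gaussianReal_real_Iic hs, hv,
    show (m + s * q - m) / s = q by field_simp; ring,
    show (m + s * q - (m + s ^ 2)) / s = q - s by field_simp; ring, stdCDF_stdQuantile hα]
  simp only [smul_eq_mul]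
  ring
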